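/- arXiv:2106.05669 — 5 statements merged into one kernel-verified Lean document; each statement's English description precedes it below -/
import Mathlib

section
/- Let P be an irreducible row-stochastic matrix on a finite state space X with stationary distribution π. Then P satisfies the detailed balance condition π(x)P(x,x') = π(x')P(x',x) for all x, x' if and only if for every finite closed path x_1, x_2, ..., x_n, x_1 in X, the product P(x_1,x_2)P(x_2,x_3)···P(x_n,x_1) equals the product of the reversed transitions P(x_1,x_n)P(x_n,x_{n-1})···P(x_2,x_1). -/
open Finset

namespace KolmogorovAux

variable {X : Type*} [Fintype X] [DecidableEq X]

/-- forward product along the walk `a :: l ++ [b]`. -/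
def fwd (P : Matrix X X ℝ) : X → List X → X → ℝ
  | a, [], b => P a b
  | a, c :: l, b => P a c * fwd P c l b

/-- backward product along the walk `a :: l ++ [b]`. -/
def bwd (P : Matrix X X ℝ) : X → List X → X → ℝ
  | a, [], b => P b a
  | a, c :: l, b => P c a * bwd P c l b

@[simp] lemma fwd_nil (P : Matrix X X ℝ) (a b : X) : fwd P a [] b = P a b := rfl
@[simp] lemma fwd_cons (P : Matrix X X ℝ) (a c b : X) (l : List X) :
    fwd P a (c :: l) b = P a c * fwd P c l b := rfl
@[simp] lemma bwd_nil (P : Matrix X X ℝ) (a b : X) : bwd P a [] b = P b a := rfl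
@[simp] lemma bwd_cons (P : Matrix X X ℝ) (a c b : X) (l : List X) :
    bwd P a (c :: l) b = P c a * bwd P c l b := rfl

lemma fwd_append (P : Matrix X X ℝ) (l₁ l₂ : List X) (a c b : X) :
    fwd P a (l₁ ++ c :: l₂) b = fwd P a l₁ c * fwd P c l₂ b := by
  induction l₁ generalizing a with
  | nil => simp
  | cons d l ih => simp [ih, mul_assoc]

lemma bwd_append (P : Matrix X X ℝ) (l₁ l₂ : List X) (a c b : X) :
    bwd P a (l₁ ++ c :: l₂) b = bwd P a l₁ c * bwd P c l₂ b := by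
  induction l₁ generalizing a with
  | nil => simp
  | cons d l ih => simp [ih, mul_assoc]

lemma fwd_nonneg {P : Matrix X X ℝ} (hP0 : ∀ x y, 0 ≤ P x y) (a : X) (l : List X) (b : X) :
    0 ≤ fwd P a l b := by
  induction l generalizing a with
  | nil => exact hP0 a b
  | cons c l ih => exact mul_nonneg (hP0 a c) (ih c)

lemma bwd_nonneg {P : Matrix X X ℝ} (hP0 : ∀ x y, 0 ≤ P x y) (a : X) (l : List X) (b : X) :
    0 ≤ bwd P a l b := by
  induction l generalizing a with
  | nil => exact hP0 b a
  | cons c l ih => exact mul_nonneg (hP0 c a) (ih c)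

lemma fwd_reverse (P : Matrix X X ℝ) (l : List X) (a b : X) :
    fwd P b l.reverse a = bwd P a l b := by
  induction l generalizing a with
  | nil => rfl
  | cons c l ih =>
    have : (c :: l).reverse = l.reverse ++ c :: [] := by simp
    rw [this, fwd_append]
    simp [ih c, mul_comm]

lemma bwd_reverse (P : Matrix X X ℝ) (l : List X) (a b : X) :
    bwd P b l.reverse a = fwd P a l b := by
  have := fwd_reverse P l.reverse b a
  rw [List.reverse_reverse] at this
  exact this.symm

lemma bridgeF (P : Matrix X X ℝ) (l : List X) (a b : X) :
    ∏ i ∈ range (l.length + 1), P ((a :: l).getD i b) ((a :: l).getD (i + 1) b)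
      = fwd P a l b := by
  induction l generalizing a with
  | nil => simp
  | cons c l ih =>
    rw [Finset.prod_range_succ']
    simp only [List.length_cons]
    have h1 : ∀ i, ((a :: c :: l).getD (i + 1) b) = ((c :: l).getD i b) := by
      intro i; rfl
    calc (∏ i ∈ range (l.length + 1),
            P ((a :: c :: l).getD (i + 1) b) ((a :: c :: l).getD (i + 1 + 1) b))
          * P ((a :: c :: l).getD 0 b) ((a :: c :: l).getD 1 b)
        = (∏ i ∈ range (l.length + 1),
            P ((c :: l).getD i b) ((c :: l).getD (i + 1) b)) * P a c := by
          rw [Finset.prod_congr rfl fun i _ => by rw [h1 i, h1 (i + 1)]]; rfl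
      _ = fwd P c l b * P a c := by rw [ih c]
      _ = P a c * fwd P c l b := mul_comm _ _

lemma bridgeB (P : Matrix X X ℝ) (l : List X) (a b : X) :
    ∏ i ∈ range (l.length + 1), P ((a :: l).getD (i + 1) b) ((a :: l).getD i b)
      = bwd P a l b := by
  induction l generalizing a with
  | nil => simp
  | cons c l ih =>
    rw [Finset.prod_range_succ']
    simp only [List.length_cons]
    have h1 : ∀ i, ((a :: c :: l).getD (i + 1) b) = ((c :: l).getD i b) := by
      intro i; rfl
    calc (∏ i ∈ range (l.length + 1),
            P ((a :: c :: l).getD (i + 1 + 1) b) ((a :: c :: l).getD (i + 1) b))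
          * P ((a :: c :: l).getD 1 b) ((a :: c :: l).getD 0 b)
        = (∏ i ∈ range (l.length + 1),
            P ((c :: l).getD (i + 1) b) ((c :: l).getD i b)) * P c a := by
          rw [Finset.prod_congr rfl fun i _ => by rw [h1 i, h1 (i + 1)]]; rfl
      _ = bwd P c l b * P c a := by rw [ih c]
      _ = P c a * bwd P c l b := mul_comm _ _

lemma pow_entry_nonneg {P : Matrix X X ℝ} (hP0 : ∀ x y, 0 ≤ P x y) :
    ∀ (n : ℕ) (x y : X), 0 ≤ (P ^ n) x y := by
  intro n
  induction n with
  | zero => intro x y; rw [pow_zero, Matrix.one_apply]; split <;> norm_num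
  | succ n ih =>
    intro x y
    rw [pow_succ, Matrix.mul_apply]
    exact Finset.sum_nonneg fun c _ => mul_nonneg (ih x c) (hP0 c y)

lemma exists_pos_of_sum_pos {f : X → ℝ} (h0 : ∀ x, 0 ≤ f x) (hs : 0 < ∑ x, f x) :
    ∃ x, 0 < f x := by
  by_contra h
  push_neg at h
  have : ∑ x, f x = 0 := Finset.sum_eq_zero fun x _ => le_antisymm (h x) (h0 x)
  rw [this] at hs
  exact lt_irrefl 0 hs

lemma exists_fwd_pos {P : Matrix X X ℝ} (hP0 : ∀ x y, 0 ≤ P x y) :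
    ∀ (n : ℕ) (b c : X), 0 < (P ^ (n + 1)) b c → ∃ l : List X, 0 < fwd P b l c := by
  intro n
  induction n with
  | zero =>
    intro b c h
    rw [pow_one] at h
    exact ⟨[], h⟩
  | succ n ih =>
    intro b c h
    rw [pow_succ, Matrix.mul_apply] at h
    obtain ⟨d, hd⟩ := exists_pos_of_sum_pos
      (fun d => mul_nonneg (pow_entry_nonneg hP0 _ b d) (hP0 d c)) h
    have h1 : 0 < (P ^ (n + 1)) b d := by
      rcases (pow_entry_nonneg hP0 (n + 1) b d).lt_or_eq with h' | h'
      · exact h'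
      · rw [← h', zero_mul] at hd; exact absurd hd (lt_irrefl 0)
    have h2 : 0 < P d c := by
      rcases (hP0 d c).lt_or_eq with h' | h'
      · exact h'
      · rw [← h', mul_zero] at hd; exact absurd hd (lt_irrefl 0)
    obtain ⟨l, hl⟩ := ih b d h1
    refine ⟨l ++ [d], ?_⟩
    have : l ++ [d] = l ++ d :: [] := rfl
    rw [this, fwd_append]
    exact mul_pos hl h2

end KolmogorovAux

open KolmogorovAux

/-- Kolmogorov's criterion: an irreducible row-stochastic matrix
satisfies detailed balance iff products along every closed path equal the
products along the reversed path. -/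
theorem kolmogorov_criterion {X : Type*} [Fintype X] [DecidableEq X]
    (P : Matrix X X ℝ)
    (hP0 : ∀ x x', 0 ≤ P x x')
    (hProw : ∀ x, ∑ x', P x x' = 1)
    (hirr : ∀ x x', ∃ n : ℕ, 0 < (P ^ n) x x')
    (π : X → ℝ) (hπpos : ∀ x, 0 < π x) (hπsum : ∑ x, π x = 1)
    (hstat : ∀ x', ∑ x, π x * P x x' = π x') :
    (∀ x x', π x * P x x' = π x' * P x' x) ↔
    (∀ (n : ℕ) (γ : Fin (n + 1) → X),
      ∏ t, P (γ t) (γ (t + 1)) = ∏ t, P (γ (t + 1)) (γ t)) := by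
  constructor
  · -- detailed balance → cycle condition
    intro hdb n γ
    have h1 : ∏ t, (π (γ t) * P (γ t) (γ (t + 1)))
        = ∏ t, (π (γ (t + 1)) * P (γ (t + 1)) (γ t)) :=
      Finset.prod_congr rfl fun t _ => hdb _ _
    rw [Finset.prod_mul_distrib, Finset.prod_mul_distrib] at h1
    have h2 : ∏ t, π (γ (t + 1)) = ∏ t, π (γ t) :=
      Equiv.prod_comp (Equiv.addRight (1 : Fin (n + 1))) fun t => π (γ t)
    rw [h2] at h1
    exact mul_left_cancel₀ (ne_of_gt (Finset.prod_pos fun t _ => hπpos _)) h1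
  · -- cycle condition → detailed balance
    intro hcyc
    have hne : Nonempty X := by
      by_contra h
      rw [not_nonempty_iff] at h
      rw [Finset.univ_eq_empty, Finset.sum_empty] at hπsum
      norm_num at hπsum
    -- list form of the cycle condition
    have hcycL : ∀ (a : X) (l : List X), fwd P a l a = bwd P a l a := by
      intro a l
      have key : ∀ t : Fin (l.length + 1),
          (a :: l).getD ((t + 1 : Fin (l.length + 1)) : ℕ) a
            = (a :: l).getD ((t : ℕ) + 1) a := by
        intro t
        by_cases ht : (t : ℕ) = l.length
        · have h0 : (t + 1 : Fin (l.length + 1)) = 0 := by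
            apply Fin.ext
            simp [Fin.val_add, ht]
          rw [h0]
          have : (a :: l).getD ((t : ℕ) + 1) a = a := by
            apply List.getD_eq_default
            simp [ht]
          rw [this]; rfl
        · have hlt : (t : ℕ) + 1 < l.length + 1 := by
            have := t.isLt; omega
          have : ((t + 1 : Fin (l.length + 1)) : ℕ) = (t : ℕ) + 1 := by
            simp [Fin.val_add, Nat.mod_eq_of_lt hlt]
          rw [this]
      have h := hcyc l.length (fun i : Fin (l.length + 1) => (a :: l).getD (i : ℕ) a)
      simp only [key] at h
      rw [Fin.prod_univ_eq_prod_range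
            (fun i => P ((a :: l).getD i a) ((a :: l).getD (i + 1) a)),
          Fin.prod_univ_eq_prod_range
            (fun i => P ((a :: l).getD (i + 1) a) ((a :: l).getD i a)),
          bridgeF, bridgeB] at h
      exact h
    -- existence of positive-forward paths between any two states
    have hfex : ∀ x y : X, ∃ l : List X, 0 < fwd P x l y := by
      intro x y
      obtain ⟨n, hn⟩ := hirr x y
      cases n with
      | succ n => exact exists_fwd_pos hP0 n x y hn
      | zero =>
        have hxy : x = y := by
          by_contra h
          rw [pow_zero, Matrix.one_apply_ne h] at hn
          exact lt_irrefl 0 hn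
        subst hxy
        obtain ⟨z, hz⟩ := exists_pos_of_sum_pos (hP0 x) (by rw [hProw]; norm_num)
        obtain ⟨m, hm⟩ := hirr z x
        cases m with
        | zero =>
          have hzx : z = x := by
            by_contra h
            rw [pow_zero, Matrix.one_apply_ne h] at hm
            exact lt_irrefl 0 hm
          exact ⟨[], by rw [fwd_nil]; exact hzx ▸ hz⟩
        | succ m =>
          obtain ⟨l, hl⟩ := exists_fwd_pos hP0 m z x hm
          exact ⟨z :: l, mul_pos hz hl⟩
    -- positivity goes backwards too
    have hposrev : ∀ (x y : X) (l : List X), 0 < fwd P x l y → 0 < bwd P x l y := by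
      intro x y l hf
      by_cases hxy : y = x
      · rw [hxy] at hf ⊢
        rw [← hcycL x l]; exact hf
      · obtain ⟨l', hl'⟩ := hfex y x
        have hc := hcycL x (l ++ y :: l')
        rw [fwd_append, bwd_append] at hc
        have hlhs : 0 < bwd P x l y * bwd P y l' x := by
          rw [← hc]; exact mul_pos hf hl'
        rcases (bwd_nonneg hP0 x l y).lt_or_eq with h | h
        · exact h
        · rw [← h, zero_mul] at hlhs; exact absurd hlhs (lt_irrefl 0)
    have hsym : ∀ x y : X, 0 < P x y → 0 < P y x := by
      intro x y h
      have := hposrev x y [] (by rw [fwd_nil]; exact h)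
      rwa [bwd_nil] at this
    -- build a reversible measure μ
    obtain ⟨x0⟩ := hne
    choose p hp using hfex x0
    set F : X → ℝ := fun x => fwd P x0 (p x) x with hF
    set B : X → ℝ := fun x => bwd P x0 (p x) x with hB
    have hFpos : ∀ x, 0 < F x := hp
    have hBpos : ∀ x, 0 < B x := fun x => hposrev x0 x (p x) (hp x)
    set μ : X → ℝ := fun x => F x / B x with hμ
    have hμpos : ∀ x, 0 < μ x := fun x => div_pos (hFpos x) (hBpos x)
    have hμdb : ∀ x y, μ x * P x y = μ y * P y x := by
      intro x y
      rcases (hP0 x y).lt_or_eq with hxy | hxy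
      · have hyx := hsym x y hxy
        have hc := hcycL x0 (p x ++ x :: (y :: (p y).reverse))
        rw [fwd_append, bwd_append, fwd_cons, bwd_cons, fwd_reverse, bwd_reverse] at hc
        have hc' : F x * (P x y * B y) = B x * (P y x * F y) := hc
        show F x / B x * P x y = F y / B y * P y x
        rw [div_mul_eq_mul_div, div_mul_eq_mul_div,
          div_eq_div_iff (hBpos x).ne' (hBpos y).ne']
        linear_combination hc'
      · have hyx : P y x = 0 := by
          rcases (hP0 y x).lt_or_eq with h | h
          · exact absurd (hsym y x h) (by rw [← hxy]; exact lt_irrefl 0)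
          · exact h.symm
        rw [← hxy, hyx, mul_zero, mul_zero]
    -- h = π/μ is harmonic
    set g : X → ℝ := fun x => π x / μ x with hg
    have hharm : ∀ y, ∑ x, P y x * g x = g y := by
      intro y
      have step : ∀ x, P y x * g x = π x * P x y / μ y := by
        intro x
        have hd := hμdb x y
        show P y x * (π x / μ x) = π x * P x y / μ y
        rw [mul_comm (P y x), div_mul_eq_mul_div,
          div_eq_div_iff (hμpos x).ne' (hμpos y).ne']
        linear_combination (-π x) * hd
      have hsum : ∑ x, P y x * g x = ∑ x, π x * P x y / μ y :=
        Finset.sum_congr rfl fun x _ => step x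
      rw [hsum, ← Finset.sum_div, hstat]
    -- maximum principle: g is constant
    obtain ⟨z, _, hz⟩ := Finset.exists_max_image Finset.univ g ⟨x0, Finset.mem_univ x0⟩
    have hstep : ∀ y c, g y = g z → 0 < P y c → g c = g z := by
      intro y c hy hyc
      have hsum : ∑ c', P y c' * (g z - g c') = 0 := by
        have h0 : ∑ c', P y c' * (g z - g c')
            = (∑ c', P y c' * g z) - ∑ c', P y c' * g c' := by
          rw [← Finset.sum_sub_distrib]
          exact Finset.sum_congr rfl fun c' _ => by ring
        rw [h0, ← Finset.sum_mul, hProw, hharm, one_mul, hy, sub_self]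
      have hterm : P y c * (g z - g c) = 0 := by
        have := (Finset.sum_eq_zero_iff_of_nonneg
          (fun c' _ => mul_nonneg (hP0 y c') (sub_nonneg.mpr (hz c' (Finset.mem_univ c'))))).mp
          hsum c (Finset.mem_univ c)
        exact this
      rcases mul_eq_zero.mp hterm with h | h
      · exact absurd h hyc.ne'
      · linarith [sub_eq_zero.mp h]
    have hprop : ∀ (n : ℕ) (y x : X), g y = g z → 0 < (P ^ n) y x → g x = g z := by
      intro n
      induction n with
      | zero =>
        intro y x hy hpos
        have hxy : y = x := by
          by_contra h
          rw [pow_zero, Matrix.one_apply_ne h] at hpos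
          exact lt_irrefl 0 hpos
        rwa [← hxy]
      | succ n ih =>
        intro y x hy hpos
        rw [pow_succ', Matrix.mul_apply] at hpos
        obtain ⟨c, hc⟩ := exists_pos_of_sum_pos
          (fun c => mul_nonneg (hP0 y c) (pow_entry_nonneg hP0 n c x)) hpos
        have h1 : 0 < P y c := by
          rcases (hP0 y c).lt_or_eq with h | h
          · exact h
          · rw [← h, zero_mul] at hc; exact absurd hc (lt_irrefl 0)
        have h2 : 0 < (P ^ n) c x := by
          rcases (pow_entry_nonneg hP0 n c x).lt_or_eq with h | h
          · exact h
          · rw [← h, mul_zero] at hc; exact absurd hc (lt_irrefl 0)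
        exact ih c x (hstep y c hy h1) h2
    have hall : ∀ x, g x = g z := by
      intro x
      obtain ⟨n, hn⟩ := hirr z x
      exact hprop n z x rfl hn
    -- conclude detailed balance for π
    intro x x'
    have hx : π x = g z * μ x := by
      have h : π x / μ x = g z := hall x
      rwa [div_eq_iff (hμpos x).ne'] at h
    have hx' : π x' = g z * μ x' := by
      have h : π x' / μ x' = g z := hall x'
      rwa [div_eq_iff (hμpos x').ne'] at h
    rw [hx, hx', mul_assoc, mul_assoc, hμdb x x']
end

section
/- Let P be an irreducible row-stochastic matrix on finite X with strictly positive entries, stationary distribution π, time reversal P*, and let P_m = (P + P*)/2 be the additive reversiblization. Then for every reversible irreducible row-stochastic matrix P̄ with positive entries, the Pythagorean identity D(P ‖ P̄) = D(P ‖ P_m) + D(P_m ‖ P̄) holds, where D(P₁ ‖ P₂) = ∑_{x,x'} π₁(x)P₁(x,x') log(P₁(x,x')/P₂(x,x')) is the informational divergence rate (π₁ the stationary distribution of P₁). -/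
/-!
Write `Q = π P` and `Q_m = π P_m = (Q + Qᵀ) / 2` for the edge measures. Expanding the
logarithms, `D(P ‖ P̄) - D(P ‖ P_m) - D(P_m ‖ P̄)` equals
`∑ (Q - Q_m)(x, x') (log P_m(x, x') - log P̄(x, x'))`.
Here `Q - Q_m` is antisymmetric with zero row sums, while reversibility of `P_m` (w.r.t. `π`) and
of `P̄` (w.r.t. `π̄`) splits `log P_m - log P̄` into a symmetric function of `(x, x')` plus a
function of `x` alone; both pair to zero against `Q - Q_m`.
-/

open Finset
open Real (log log_div log_mul)

section Antisymmetric

variable {ι R : Type*} [Fintype ι] [Ring R] {A : ι → ι → R}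

theorem sum_sum_mul_eq_zero_of_antisymm_of_symm [IsAddTorsionFree R]
    (hA : ∀ x y, A x y = -A y x) {S : ι → ι → R} (hS : ∀ x y, S x y = S y x) :
    ∑ x, ∑ y, A x y * S x y = 0 := by
  refine self_eq_neg.mp ?_
  calc ∑ x, ∑ y, A x y * S x y = ∑ y, ∑ x, A x y * S x y := sum_comm
    _ = -∑ x, ∑ y, A x y * S x y := by
      simp only [← sum_neg_distrib]
      exact sum_congr rfl fun y _ => sum_congr rfl fun x _ => by rw [hA, hS, neg_mul]

theorem sum_sum_mul_left_eq_zero (hA : ∀ x, ∑ y, A x y = 0) (h : ι → R) :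
    ∑ x, ∑ y, A x y * h x = 0 :=
  sum_eq_zero fun x _ => by rw [← sum_mul, hA, zero_mul]

end Antisymmetric

theorem mul_log_div_eq_add_add {u p q r : ℝ} (hp : p ≠ 0) (hq : q ≠ 0) (hr : r ≠ 0) :
    u * p * log (p / r) =
      u * p * log (p / q) + u * q * log (q / r) + (u * p - u * q) * (log q - log r) := by
  rw [log_div hp hr, log_div hp hq, log_div hq hr]
  ring

section MarkovKernel

variable {X : Type*}

def IsReversible (μ : X → ℝ) (Q : Matrix X X ℝ) : Prop :=
  ∀ x y, μ x * Q x y = μ y * Q y x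

noncomputable def timeReversal (π : X → ℝ) (P : Matrix X X ℝ) : Matrix X X ℝ :=
  fun x x' => π x' * P x' x / π x

noncomputable def additiveReversiblization (π : X → ℝ) (P : Matrix X X ℝ) : Matrix X X ℝ :=
  fun x x' => (P x x' + timeReversal π P x x') / 2

variable {π : X → ℝ} {P : Matrix X X ℝ}

theorem additiveReversiblization_pos (hP : ∀ x x', 0 < P x x') (hπ : ∀ x, 0 < π x)
    (x x' : X) : 0 < additiveReversiblization π P x x' := by
  have := hP x x'; have := hP x' x; have := hπ x; have := hπ x'
  unfold additiveReversiblization timeReversal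
  positivity

theorem mul_additiveReversiblization {x : X} (hπx : π x ≠ 0) (x' : X) :
    π x * additiveReversiblization π P x x' = (π x * P x x' + π x' * P x' x) / 2 := by
  unfold additiveReversiblization timeReversal
  field_simp

theorem isReversible_additiveReversiblization (hπ : ∀ x, π x ≠ 0) :
    IsReversible π (additiveReversiblization π P) := fun x y => by
  rw [mul_additiveReversiblization (hπ x), mul_additiveReversiblization (hπ y), add_comm]

theorem sum_mul_additiveReversiblization [Fintype X] (hProw : ∀ x, ∑ x', P x x' = 1)
    (hstat : ∀ x', ∑ x, π x * P x x' = π x') {x : X} (hπx : π x ≠ 0) :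
    ∑ x', π x * additiveReversiblization π P x x' = π x := by
  simp only [mul_additiveReversiblization hπx, ← sum_div, sum_add_distrib, ← mul_sum, hProw,
    hstat]
  ring

theorem sum_sum_mul_log_sub_log_eq_zero [Fintype X] {A Q Q' : Matrix X X ℝ} {μ μ' : X → ℝ}
    (hA : ∀ x y, A x y = -A y x) (hArow : ∀ x, ∑ y, A x y = 0)
    (hμ : ∀ x, 0 < μ x) (hQ : ∀ x y, 0 < Q x y) (hQrev : IsReversible μ Q)
    (hμ' : ∀ x, 0 < μ' x) (hQ' : ∀ x y, 0 < Q' x y) (hQ'rev : IsReversible μ' Q') :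
    ∑ x, ∑ y, A x y * (log (Q x y) - log (Q' x y)) = 0 := by
  have hsplit : ∀ x y, log (Q x y) - log (Q' x y) =
      (log (μ x * Q x y) - log (μ' x * Q' x y)) + (log (μ' x) - log (μ x)) := fun x y => by
    rw [log_mul (hμ x).ne' (hQ x y).ne', log_mul (hμ' x).ne' (hQ' x y).ne']
    ring
  simp only [hsplit, mul_add, sum_add_distrib]
  rw [sum_sum_mul_eq_zero_of_antisymm_of_symm hA fun x y => by rw [hQrev, hQ'rev],
    sum_sum_mul_left_eq_zero hArow, add_zero]

end MarkovKernel

theorem m_projection_pythagorean_general {X : Type*} [Fintype X]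
    (P Pbar : Matrix X X ℝ) (π πbar : X → ℝ)
    (hPpos : ∀ x x', 0 < P x x')
    (hProw : ∀ x, ∑ x', P x x' = 1)
    (hπpos : ∀ x, 0 < π x)
    (hstat : ∀ x', ∑ x, π x * P x x' = π x')
    (hPbarpos : ∀ x x', 0 < Pbar x x')
    (hπbarpos : ∀ x, 0 < πbar x)
    (hrev : ∀ x x', πbar x * Pbar x x' = πbar x' * Pbar x' x)
    (Pm : Matrix X X ℝ)
    (hPm : ∀ x x', Pm x x' = (P x x' + π x' * P x' x / π x) / 2) :
    ∑ x, ∑ x', π x * P x x' * Real.log (P x x' / Pbar x x') =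
      (∑ x, ∑ x', π x * P x x' * Real.log (P x x' / Pm x x')) +
      ∑ x, ∑ x', π x * Pm x x' * Real.log (Pm x x' / Pbar x x') := by
  obtain rfl : Pm = additiveReversiblization π P := Matrix.ext hPm
  set Pm := additiveReversiblization π P
  have hπ x : π x ≠ 0 := (hπpos x).ne'
  have hPmpos : ∀ x x', 0 < Pm x x' := additiveReversiblization_pos hPpos hπpos
  have hcross := sum_sum_mul_log_sub_log_eq_zero
    (A := fun x x' => π x * P x x' - π x * Pm x x')
    (fun x x' => by simp only [Pm, mul_additiveReversiblization (hπ _)]; ring)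
    (fun x => by
      rw [sum_sub_distrib, ← mul_sum, hProw, mul_one,
        sum_mul_additiveReversiblization hProw hstat (hπ x), sub_self])
    hπpos hPmpos (isReversible_additiveReversiblization hπ) hπbarpos hPbarpos hrev
  calc _ = ∑ x, ∑ x', (π x * P x x' * log (P x x' / Pm x x') +
        π x * Pm x x' * log (Pm x x' / Pbar x x') +
        (π x * P x x' - π x * Pm x x') * (log (Pm x x') - log (Pbar x x'))) :=
        sum_congr rfl fun x _ => sum_congr rfl fun x' _ =>
          mul_log_div_eq_add_add (hPpos x x').ne' (hPmpos x x').ne' (hPbarpos x x').ne'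
    _ = _ := by simp only [sum_add_distrib, hcross, add_zero]

/-- Pythagorean identity for the m-projection (additive
reversiblization): D(P‖P̄) = D(P‖P_m) + D(P_m‖P̄) for every reversible
positive row-stochastic P̄. -/
theorem m_projection_pythagorean {X : Type*} [Fintype X]
    (P Pbar : Matrix X X ℝ) (π πbar : X → ℝ)
    (hPpos : ∀ x x', 0 < P x x')
    (hProw : ∀ x, ∑ x', P x x' = 1)
    (hπpos : ∀ x, 0 < π x) (hπsum : ∑ x, π x = 1)
    (hstat : ∀ x', ∑ x, π x * P x x' = π x')
    (hPbarpos : ∀ x x', 0 < Pbar x x')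
    (hPbarrow : ∀ x, ∑ x', Pbar x x' = 1)
    (hπbarpos : ∀ x, 0 < πbar x) (hπbarsum : ∑ x, πbar x = 1)
    (hπbarstat : ∀ x', ∑ x, πbar x * Pbar x x' = πbar x')
    (hrev : ∀ x x', πbar x * Pbar x x' = πbar x' * Pbar x' x)
    (Pm : Matrix X X ℝ)
    (hPm : ∀ x x', Pm x x' = (P x x' + π x' * P x' x / π x) / 2) :
    ∑ x, ∑ x', π x * P x x' * Real.log (P x x' / Pbar x x') =
      (∑ x, ∑ x', π x * P x x' * Real.log (P x x' / Pm x x')) +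
      ∑ x, ∑ x', π x * Pm x x' * Real.log (Pm x x' / Pbar x x') :=
  m_projection_pythagorean_general P Pbar π πbar hPpos hProw hπpos hstat hPbarpos hπbarpos hrev Pm
    hPm
end

section
/- Let P be an irreducible row-stochastic matrix on finite X with positive entries and stationary distribution π. Define P̃_e(x,x') = √(P(x,x')·P*(x,x')) = √(P(x,x')P(x',x)π(x')/π(x)). Let ρ be the Perron–Frobenius eigenvalue of P̃_e and v its positive right eigenvector, and set P_e(x,x') = P̃_e(x,x')v(x')/(ρ v(x)). Then P_e is a row-stochastic reversible matrix. Moreover, the vector x ↦ √(π(x)) is a right eigenvector of the symmetric matrix S(x,x') = √(P(x,x')P(x',x)) when P is reversible. -/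
/-!
Since `π x * P̃_e x x' = √(π x * π x' * P x x' * P x' x)` is symmetric in `x, x'`, the matrix
`P̃_e` is in detailed balance with `π`. The Doob `h`-transform of a matrix by a positive
eigenvector `v` is row-stochastic, and it turns detailed balance with `μ` into detailed balance
with `μ * v ^ 2`; so `P_e` is reversible with respect to the normalization of `π * v ^ 2`.
For reversible `P` one has `√(P x x' * P x' x * π x') = P x x' * √(π x)`, so the eigenvector
equation for `√π` is the row-sum identity of `P`.
-/

open Finset

section

variable {X : Type*}

def DetailedBalance (μ : X → ℝ) (Q : Matrix X X ℝ) : Prop :=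
  ∀ x x', μ x * Q x x' = μ x' * Q x' x

namespace DetailedBalance

variable {μ : X → ℝ} {Q : Matrix X X ℝ}

theorem div_const (h : DetailedBalance μ Q) (c : ℝ) :
    DetailedBalance (fun x => μ x / c) Q := by
  intro x x'
  simp only [div_mul_eq_mul_div, h x x']

theorem stationary [Fintype X] (h : DetailedBalance μ Q) (hrow : ∀ x, ∑ x', Q x x' = 1) (x' : X) :
    ∑ x, μ x * Q x x' = μ x' := by
  simp only [h _ x', ← mul_sum, hrow, mul_one]

end DetailedBalance

noncomputable def hTransform (K : Matrix X X ℝ) (ρ : ℝ) (v : X → ℝ) : Matrix X X ℝ :=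
  Matrix.of fun x x' => K x x' * v x' / (ρ * v x)

section hTransform

variable {K : Matrix X X ℝ} {ρ : ℝ} {v : X → ℝ}

theorem hTransform_pos (hK : ∀ x x', 0 < K x x') (hρ : 0 < ρ) (hv : ∀ x, 0 < v x)
    (x x' : X) : 0 < hTransform K ρ v x x' :=
  div_pos (mul_pos (hK x x') (hv x')) (mul_pos hρ (hv x))

theorem sum_hTransform_eq_one [Fintype X] (heig : ∀ x, ∑ x', K x x' * v x' = ρ * v x) (hρ : ρ ≠ 0)
    (hv : ∀ x, v x ≠ 0) (x : X) : ∑ x', hTransform K ρ v x x' = 1 := by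
  simp only [hTransform, Matrix.of_apply, ← sum_div, heig x]
  exact div_self (mul_ne_zero hρ (hv x))

theorem DetailedBalance.hTransform {μ : X → ℝ} (h : DetailedBalance μ K) (hv : ∀ x, v x ≠ 0) :
    DetailedBalance (fun x => μ x * v x ^ 2) (hTransform K ρ v) := by
  have key : ∀ a b, μ a * v a ^ 2 * (K a b * v b / (ρ * v a)) = μ a * K a b * (v a * v b) / ρ := by
    intro a b
    field_simp [hv a]
  intro x x'
  simp only [_root_.hTransform, Matrix.of_apply, key, h x x']
  ring

end hTransform

theorem mul_sqrt_mul_div_eq_sqrt {a b p q : ℝ} (ha : 0 < a) :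
    a * Real.sqrt (p * (b * q / a)) = Real.sqrt (a * b * p * q) := by
  rw [← Real.sqrt_sq ha.le, ← Real.sqrt_mul (sq_nonneg a), Real.sqrt_sq ha.le]
  congr 1
  field_simp

theorem detailedBalance_sqrt_mul_timeReversal {P : Matrix X X ℝ} {π : X → ℝ}
    (hπ : ∀ x, 0 < π x) :
    DetailedBalance π (Matrix.of fun x x' => Real.sqrt (P x x' * (π x' * P x' x / π x))) := by
  intro x x'
  simp only [Matrix.of_apply, mul_sqrt_mul_div_eq_sqrt (hπ _)]
  ring_nf

theorem sum_sqrt_mul_mul_sqrt_eq_sqrt [Fintype X] {P : Matrix X X ℝ} {π : X → ℝ}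
    (hP : ∀ x x', 0 ≤ P x x') (hrow : ∀ x, ∑ x', P x x' = 1) (hπ : ∀ x, 0 ≤ π x)
    (hrev : DetailedBalance π P) (x : X) :
    ∑ x', Real.sqrt (P x x' * P x' x) * Real.sqrt (π x') = Real.sqrt (π x) := by
  have hterm : ∀ x', Real.sqrt (P x x' * P x' x) * Real.sqrt (π x') =
      P x x' * Real.sqrt (π x) := by
    intro x'
    have h : P x x' * P x' x * π x' = P x x' ^ 2 * π x := by
      linear_combination (-P x x') * hrev x x'
    rw [← Real.sqrt_mul' _ (hπ x'), h, Real.sqrt_mul' _ (hπ x), Real.sqrt_sq (hP x x')]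
  rw [sum_congr rfl fun x' _ => hterm x', ← sum_mul, hrow, one_mul]

end

theorem exponential_reversiblization_general {X : Type*} [Fintype X]
    (P : Matrix X X ℝ) (π : X → ℝ)
    (hPpos : ∀ x x', 0 < P x x')
    (hProw : ∀ x, ∑ x', P x x' = 1)
    (hπpos : ∀ x, 0 < π x) (hπsum : ∑ x, π x = 1)
    (Pt : Matrix X X ℝ)
    (hPt : ∀ x x', Pt x x' = Real.sqrt (P x x' * (π x' * P x' x / π x)))
    (ρ : ℝ) (v : X → ℝ) (hρ : 0 < ρ) (hv : ∀ x, 0 < v x)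
    (heig : ∀ x, ∑ x', Pt x x' * v x' = ρ * v x)
    (Pe : Matrix X X ℝ)
    (hPe : ∀ x x', Pe x x' = Pt x x' * v x' / (ρ * v x)) :
    ((∀ x x', 0 < Pe x x') ∧ (∀ x, ∑ x', Pe x x' = 1) ∧
      ∃ πe : X → ℝ, (∀ x, 0 < πe x) ∧ (∑ x, πe x = 1) ∧
        (∀ x', ∑ x, πe x * Pe x x' = πe x') ∧
        (∀ x x', πe x * Pe x x' = πe x' * Pe x' x)) ∧
    ((∀ x x', π x * P x x' = π x' * P x' x) →
      ∀ x, ∑ x', Real.sqrt (P x x' * P x' x) * Real.sqrt (π x') =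
        Real.sqrt (π x)) := by
  have hne : (univ : Finset X).Nonempty :=
    univ_nonempty_iff.mpr (not_isEmpty_iff.mp fun h => by simp at hπsum)
  obtain rfl : Pt = _ := Matrix.ext hPt
  obtain rfl : Pe = hTransform _ ρ v := Matrix.ext hPe
  have hPt_pos : ∀ x x', 0 < Real.sqrt (P x x' * (π x' * P x' x / π x)) := fun x x' =>
    Real.sqrt_pos.mpr (by have := hPpos x x'; have := hPpos x' x; have := hπpos x;
                          have := hπpos x'; positivity)
  have hbal := (detailedBalance_sqrt_mul_timeReversal (P := P) hπpos).hTransform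
    (ρ := ρ) fun x => (hv x).ne'
  have hrow := sum_hTransform_eq_one heig hρ.ne' fun x => (hv x).ne'
  set Z := ∑ x, π x * v x ^ 2
  have hZ : 0 < Z := sum_pos (fun x _ => mul_pos (hπpos x) (pow_pos (hv x) 2)) hne
  refine ⟨⟨hTransform_pos hPt_pos hρ hv, hrow, fun x => π x * v x ^ 2 / Z,
    fun x => div_pos (mul_pos (hπpos x) (pow_pos (hv x) 2)) hZ,
    by rw [← sum_div, div_self hZ.ne'], (hbal.div_const Z).stationary hrow, hbal.div_const Z⟩,
    fun hrev => sum_sqrt_mul_mul_sqrt_eq_sqrt (fun x x' => (hPpos x x').le) hProw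
      (fun x => (hπpos x).le) hrev⟩

/-- The exponential reversiblization P_e, obtained by
Perron–Frobenius rescaling of P̃_e(x,x') = √(P(x,x')P*(x,x')), is
row-stochastic and reversible; moreover when P is reversible, √π is a right
eigenvector of the symmetric matrix S(x,x') = √(P(x,x')P(x',x)). -/
theorem exponential_reversiblization {X : Type*} [Fintype X]
    (P : Matrix X X ℝ) (π : X → ℝ)
    (hPpos : ∀ x x', 0 < P x x')
    (hProw : ∀ x, ∑ x', P x x' = 1)
    (hπpos : ∀ x, 0 < π x) (hπsum : ∑ x, π x = 1)
    (hstat : ∀ x', ∑ x, π x * P x x' = π x')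
    (Pt : Matrix X X ℝ)
    (hPt : ∀ x x', Pt x x' = Real.sqrt (P x x' * (π x' * P x' x / π x)))
    (ρ : ℝ) (v : X → ℝ) (hρ : 0 < ρ) (hv : ∀ x, 0 < v x)
    (heig : ∀ x, ∑ x', Pt x x' * v x' = ρ * v x)
    (Pe : Matrix X X ℝ)
    (hPe : ∀ x x', Pe x x' = Pt x x' * v x' / (ρ * v x)) :
    ((∀ x x', 0 < Pe x x') ∧ (∀ x, ∑ x', Pe x x' = 1) ∧
      ∃ πe : X → ℝ, (∀ x, 0 < πe x) ∧ (∑ x, πe x = 1) ∧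
        (∀ x', ∑ x, πe x * Pe x x' = πe x') ∧
        (∀ x x', πe x * Pe x x' = πe x' * Pe x' x)) ∧
    ((∀ x x', π x * P x x' = π x' * P x' x) →
      ∀ x, ∑ x', Real.sqrt (P x x' * P x' x) * Real.sqrt (π x') =
        Real.sqrt (π x)) :=
  exponential_reversiblization_general P π hPpos hProw hπpos hπsum Pt hPt ρ v hρ hv heig Pe hPe
end

section
/- The matrices g_{ij} = E_{ij} + E_{ji} for pairs (i,j) with 1 ≤ j ≤ i ≤ m, excluding one fixed off-diagonal pair, form a basis of the quotient space of log-reversible m×m matrices modulo the subspace N = {(x,x') ↦ f(x') − f(x) + c}. In particular this quotient has dimension m(m+1)/2 − 1. -/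
/-- The subspace N of matrices of the form (x,x') ↦ f(x') - f(x) + c. -/
def nSub (m : ℕ) : Submodule ℝ (Matrix (Fin m) (Fin m) ℝ) where
  carrier := {g | ∃ (f : Fin m → ℝ) (c : ℝ), ∀ i j, g i j = f j - f i + c}
  add_mem' := by
    rintro a b ⟨f, c, hf⟩ ⟨g, d, hg⟩
    exact ⟨f + g, c + d, fun i j => by
      simp [Matrix.add_apply, hf i j, hg i j]; ring⟩
  zero_mem' := ⟨0, 0, fun i j => by simp⟩
  smul_mem' := by
    rintro r a ⟨f, c, hf⟩
    exact ⟨r • f, r * c, fun i j => by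
      simp [Matrix.smul_apply, hf i j]; ring⟩

/-- The subspace of log-reversible matrices. -/
def logRevSub (m : ℕ) : Submodule ℝ (Matrix (Fin m) (Fin m) ℝ) where
  carrier := {g | ∃ f : Fin m → ℝ, ∀ i j, g i j = g j i + f j - f i}
  add_mem' := by
    rintro a b ⟨f, hf⟩ ⟨g, hg⟩
    exact ⟨f + g, fun i j => by
      simp [Matrix.add_apply, hf i j, hg i j]; ring⟩
  zero_mem' := ⟨0, fun i j => by simp⟩
  smul_mem' := by
    rintro r a ⟨f, hf⟩
    refine ⟨r • f, fun i j => ?_⟩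
    have := hf i j
    simp only [Matrix.smul_apply, Pi.smul_apply, smul_eq_mul]
    rw [this]; ring

/-- The symmetric matrix units g_{ij} = E_{ij} + E_{ji}. -/
def gMat (m : ℕ) (p : Fin m × Fin m) : Matrix (Fin m) (Fin m) ℝ :=
  Matrix.single p.1 p.2 1 + Matrix.single p.2 p.1 1

/-!
A log-reversible matrix `h` differs from its symmetric part `(h + hᵀ)/2` by the matrix
`(f j - f i)/2`, which lies in `N`; so modulo `N` the log-reversible matrices are spanned by the
symmetric ones, hence by the `g_p`. A symmetric matrix in `N` is constant, so modulo `N` the only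
relation among the `g_p` is that their sum, twice the all-ones matrix, vanishes. This relation
expresses the excluded generator through the others; and a combination of the remaining
generators that is constant vanishes at the excluded entry, hence is zero.
-/

open Matrix

lemma card_subtype_snd_le_fst (α : Type*) [Fintype α] [LinearOrder α] :
    Nat.card {p : α × α // p.2 ≤ p.1} = (Fintype.card α + 1).choose 2 := by
  rw [← Sym2.card, ← Nat.card_eq_fintype_card]
  exact Nat.card_congr
    ((Equiv.subtypeEquiv (Equiv.prodComm α α) fun _ => Iff.rfl).trans Sym2.sortEquiv.symm)

lemma card_subtype_snd_le_fst_ne {α : Type*} [Fintype α] [LinearOrder α] {e : α × α}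
    (he : e.2 ≤ e.1) :
    Nat.card {p : α × α // p.2 ≤ p.1 ∧ p ≠ e} = (Fintype.card α + 1).choose 2 - 1 := by
  change Nat.card ↥({p : α × α | p.2 ≤ p.1} \ {e}) = _
  rw [Nat.card_coe_set_eq, Set.ncard_sdiff_singleton_of_mem (s := {p : α × α | p.2 ≤ p.1}) he,
    ← Nat.card_coe_set_eq, Set.coe_ofPred, card_subtype_snd_le_fst]

variable {m : ℕ}

lemma gMat_apply (p : Fin m × Fin m) (i j : Fin m) :
    gMat m p i j = (if p = (i, j) then 1 else 0) + (if p = (j, i) then 1 else 0) := by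
  simp [gMat, Matrix.single, Prod.ext_iff, and_comm]

lemma gMat_isSymm (p : Fin m × Fin m) : (gMat m p).IsSymm :=
  IsSymm.ext fun i j => by rw [gMat_apply, gMat_apply, add_comm]

lemma gMat_swap (p : Fin m × Fin m) : gMat m p.swap = gMat m p := by
  simp only [gMat, Prod.fst_swap, Prod.snd_swap, add_comm]

lemma gMat_apply_eq_zero {p q : Fin m × Fin m} (hp : p.2 ≤ p.1) (hq : q.2 ≤ q.1)
    (hpq : p ≠ q) :
    gMat m p q.1 q.2 = 0 := by
  have hpq' : p ≠ q.swap := by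
    rintro rfl
    exact hpq (Prod.ext (le_antisymm hq hp) (le_antisymm hp hq))
  simp [gMat_apply, hpq, show p ≠ (q.2, q.1) from hpq']

lemma gMat_apply_self_ne_zero (p : Fin m × Fin m) : gMat m p p.1 p.2 ≠ 0 := by
  rw [gMat_apply, if_pos rfl]
  positivity

lemma sum_smul_gMat {S : Matrix (Fin m) (Fin m) ℝ} (hS : S.IsSymm) :
    ∑ p : Fin m × Fin m, S p.1 p.2 • gMat m p = (2 : ℝ) • S := by
  ext i j
  simp only [Matrix.sum_apply, Matrix.smul_apply, gMat_apply, smul_eq_mul, mul_add, mul_ite,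
    mul_one, mul_zero, Finset.sum_add_distrib, Finset.sum_ite_eq', Finset.mem_univ, if_true]
  rw [hS.apply]
  ring

lemma sum_gMat_mem_nSub : ∑ p : Fin m × Fin m, gMat m p ∈ nSub m := by
  refine ⟨0, 2, fun i j => ?_⟩
  simp only [Matrix.sum_apply, gMat_apply, Finset.sum_add_distrib, Finset.sum_ite_eq',
    Finset.mem_univ, if_true, Pi.zero_apply]
  norm_num

lemma Matrix.IsSymm.exists_const_of_mem_nSub {S : Matrix (Fin m) (Fin m) ℝ} (hS : S.IsSymm)
    (hN : S ∈ nSub m) : ∃ c, ∀ i j, S i j = c := by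
  obtain ⟨f, c, hf⟩ := hN
  exact ⟨c, fun i j => by linarith [hf i j, hf j i, hS.apply i j]⟩

lemma Matrix.IsSymm.mem_logRevSub {S : Matrix (Fin m) (Fin m) ℝ} (hS : S.IsSymm) :
    S ∈ logRevSub m :=
  ⟨0, fun i j => by simp [hS.apply]⟩

lemma sub_symmetrization_mem_nSub {h : Matrix (Fin m) (Fin m) ℝ} (hh : h ∈ logRevSub m) :
    h - (2⁻¹ : ℝ) • (h + hᵀ) ∈ nSub m := by
  obtain ⟨f, hf⟩ := hh
  refine ⟨(2⁻¹ : ℝ) • f, 0, fun i j => ?_⟩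
  simp only [Matrix.sub_apply, Matrix.smul_apply, Matrix.add_apply, transpose_apply,
    Pi.smul_apply, smul_eq_mul]
  rw [hf i j]
  ring

section quotient

variable {e : Fin m × Fin m}

lemma mkQ_gMat_mem_span_of_ne {p : Fin m × Fin m} (hpe : p ≠ e) (hpe' : p ≠ e.swap) :
    (nSub m).mkQ (gMat m p) ∈ Submodule.span ℝ (Set.range
      fun t : {p : Fin m × Fin m // p.2 ≤ p.1 ∧ p ≠ e} => (nSub m).mkQ (gMat m t.1)) := by
  rcases le_total p.2 p.1 with hp | hp
  · exact Submodule.subset_span ⟨⟨p, hp, hpe⟩, rfl⟩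
  · rw [← gMat_swap]
    exact Submodule.subset_span
      ⟨⟨p.swap, hp, fun h => hpe' (by rw [← h, Prod.swap_swap])⟩, rfl⟩

lemma mkQ_gMat_mem_span (p : Fin m × Fin m) :
    (nSub m).mkQ (gMat m p) ∈ Submodule.span ℝ (Set.range
      fun t : {p : Fin m × Fin m // p.2 ≤ p.1 ∧ p ≠ e} => (nSub m).mkQ (gMat m t.1)) := by
  set A := Submodule.span ℝ (Set.range
    fun t : {p : Fin m × Fin m // p.2 ≤ p.1 ∧ p ≠ e} => (nSub m).mkQ (gMat m t.1))
  set s : Finset (Fin m × Fin m) := {e, e.swap}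
  have hzero : ∑ p, (nSub m).mkQ (gMat m p) = 0 := by
    rw [← map_sum, Submodule.mkQ_apply, Submodule.Quotient.mk_eq_zero]
    exact sum_gMat_mem_nSub
  have hs : ∑ p ∈ s, (nSub m).mkQ (gMat m p) = s.card • (nSub m).mkQ (gMat m e) := by
    rw [← Finset.sum_const]
    refine Finset.sum_congr rfl fun p hp => ?_
    rcases Finset.mem_insert.1 hp with rfl | hp
    · rfl
    · rw [Finset.mem_singleton.1 hp, gMat_swap]
  rw [← Finset.sum_add_sum_compl s, hs, ← Nat.cast_smul_eq_nsmul ℝ] at hzero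
  have he : (nSub m).mkQ (gMat m e) ∈ A := by
    have hs0 : (s.card : ℝ) ≠ 0 :=
      Nat.cast_ne_zero.2 (Finset.card_ne_zero_of_mem (Finset.mem_insert_self _ _))
    rw [← Submodule.smul_mem_iff A hs0, eq_neg_of_add_eq_zero_left hzero]
    refine A.neg_mem (A.sum_mem fun p hp => ?_)
    obtain ⟨hpe, hpe'⟩ : p ≠ e ∧ p ≠ e.swap := by simpa [s, not_or] using hp
    exact mkQ_gMat_mem_span_of_ne hpe hpe'
  rcases eq_or_ne p e with rfl | hpe
  · exact he
  rcases eq_or_ne p e.swap with rfl | hpe'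
  · rwa [gMat_swap]
  exact mkQ_gMat_mem_span_of_ne hpe hpe'

lemma span_range_mkQ_gMat :
    Submodule.span ℝ (Set.range
      fun t : {p : Fin m × Fin m // p.2 ≤ p.1 ∧ p ≠ e} => (nSub m).mkQ (gMat m t.1)) =
      (logRevSub m).map (nSub m).mkQ := by
  refine le_antisymm (Submodule.span_le.2 ?_) ?_
  · rintro _ ⟨t, rfl⟩
    exact ⟨gMat m t.1, (gMat_isSymm _).mem_logRevSub, rfl⟩
  · rintro _ ⟨h, hh, rfl⟩
    set S := (2⁻¹ : ℝ) • (h + hᵀ)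
    have hS : S.IsSymm := (isSymm_add_transpose_self h).smul _
    have hhS : (nSub m).mkQ h = (nSub m).mkQ S :=
      (Submodule.Quotient.eq _).2 (sub_symmetrization_mem_nSub hh)
    have hSsum : S = (2⁻¹ : ℝ) • ∑ p : Fin m × Fin m, S p.1 p.2 • gMat m p := by
      rw [sum_smul_gMat hS, smul_smul]
      norm_num
    rw [hhS, hSsum, map_smul, map_sum]
    exact Submodule.smul_mem _ _ (Submodule.sum_mem _ fun p _ => by
      rw [map_smul]; exact Submodule.smul_mem _ _ (mkQ_gMat_mem_span p))

lemma linearIndependent_mkQ_gMat (he : e.2 ≤ e.1) :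
    LinearIndependent ℝ
      fun t : {p : Fin m × Fin m // p.2 ≤ p.1 ∧ p ≠ e} => (nSub m).mkQ (gMat m t.1) := by
  rw [Fintype.linearIndependent_iff]
  intro c hc t
  set S := ∑ u, c u • gMat m u.1
  have hSN : S ∈ nSub m := by
    rw [← Submodule.Quotient.mk_eq_zero, ← Submodule.mkQ_apply, map_sum]
    simpa only [map_smul] using hc
  have hS : S.IsSymm := IsSymm.ext fun i j => by
    simp only [S, Matrix.sum_apply, Matrix.smul_apply, (gMat_isSymm _).apply]
  have hSapply : ∀ q : Fin m × Fin m, S q.1 q.2 = ∑ u, c u * gMat m u.1 q.1 q.2 := fun q => by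
    simp only [S, Matrix.sum_apply, Matrix.smul_apply, smul_eq_mul]
  obtain ⟨k, hk⟩ := hS.exists_const_of_mem_nSub hSN
  have hk0 : k = 0 := by
    rw [← hk e.1 e.2, hSapply]
    exact Finset.sum_eq_zero fun u _ => by rw [gMat_apply_eq_zero u.2.1 he u.2.2, mul_zero]
  have hct : c t * gMat m t.1 t.1.1 t.1.2 = 0 := by
    calc c t * gMat m t.1 t.1.1 t.1.2 = ∑ u, c u * gMat m u.1 t.1.1 t.1.2 := by
          symm
          refine Fintype.sum_eq_single t fun u hut => ?_
          rw [gMat_apply_eq_zero u.2.1 t.2.1 (Subtype.coe_ne_coe.2 hut), mul_zero]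
      _ = 0 := by rw [← hSapply, hk, hk0]
  exact (mul_eq_zero.1 hct).resolve_right (gMat_apply_self_ne_zero _)

end quotient

/-- The images of the matrices g_{ij} = E_{ij} + E_{ji}, for
j ≤ i excluding the fixed pair (m,1) (indices (m-1, 0) in Fin m), form a basis
of the quotient of the space of log-reversible matrices by N; in particular
this quotient has dimension m(m+1)/2 - 1. -/
theorem reversible_basis (m : ℕ) (hm : 2 ≤ m) :
    let T := {p : Fin m × Fin m //
      p.2 ≤ p.1 ∧ p ≠ ((⟨m - 1, by omega⟩ : Fin m), (⟨0, by omega⟩ : Fin m))}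
    let v : T → (Matrix (Fin m) (Fin m) ℝ) ⧸ nSub m :=
      fun p => (nSub m).mkQ (gMat m p.1)
    LinearIndependent ℝ v ∧
    Submodule.span ℝ (Set.range v) =
      Submodule.map (nSub m).mkQ (logRevSub m) ∧
    Nat.card T = m * (m + 1) / 2 - 1 := by
  intro T v
  have he : (⟨0, by omega⟩ : Fin m) ≤ ⟨m - 1, by omega⟩ := Fin.mk_le_mk.2 (Nat.zero_le _)
  refine ⟨linearIndependent_mkQ_gMat he, span_range_mkQ_gMat, ?_⟩
  rw [card_subtype_snd_le_fst_ne he, Fintype.card_fin, Nat.choose_two_right, Nat.add_sub_cancel,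
    mul_comm]
end

section
/- For i ≥ j in {1,...,m} with m ≥ 1, define Q_{ij} to be the m×m matrix with entries Q_{ij}(x,x') = (1/4)(δ_i(x)δ_i(x') + δ_i(x)δ_j(x') + δ_j(x)δ_i(x') + δ_j(x)δ_j(x')). Then the family {Q_{ij} : i ≥ j} is linearly independent and forms a basis of the space of symmetric m×m real matrices. -/
/-- The subspace of symmetric m×m real matrices. -/
def symSub (m : ℕ) : Submodule ℝ (Matrix (Fin m) (Fin m) ℝ) where
  carrier := {g | ∀ i j, g i j = g j i}
  add_mem' := by
    intro a b ha hb i j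
    simp [Matrix.add_apply, ha i j, hb i j]
  zero_mem' := by intro i j; rfl
  smul_mem' := by
    intro c g hg i j
    simp [Matrix.smul_apply, hg i j]

/-- The edge measure of the iid process with distribution (δ_i + δ_j)/2. -/
noncomputable def Qiid (m : ℕ) (p : Fin m × Fin m) : Matrix (Fin m) (Fin m) ℝ :=
  fun x x' => (1 / 4) *
    (((if x = p.1 then (1 : ℝ) else 0) + (if x = p.2 then 1 else 0)) *
     ((if x' = p.1 then (1 : ℝ) else 0) + (if x' = p.2 then 1 else 0)))

/-!
With `E i j = single i j 1`, one has `Q_ii = E i i` and `4 Q_ij - Q_ii - Q_jj = E i j + E j i`;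
these matrices span the symmetric matrices (`2 A = ∑ A i j (E i j + E j i)`), and each `Q_ij` is
symmetric. For independence, when `j < i` the only `Q` with a nonzero `(i, j)` entry is `Q_ij`,
so the off-diagonal coefficients vanish; the remaining combination is `∑ c_i E i i`.
-/

open Matrix Submodule

lemma mem_symSub_iff {m : ℕ} {A : Matrix (Fin m) (Fin m) ℝ} : A ∈ symSub m ↔ A.IsSymm :=
  ⟨fun h => IsSymm.ext fun i j => h j i, fun h i j => h.apply j i⟩

lemma Matrix.IsSymm.mem_span_single_add_single {K n : Type*} [Field K] [NeZero (2 : K)]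
    [Fintype n] [DecidableEq n] {A : Matrix n n K} (hA : A.IsSymm) :
    A ∈ span K (Set.range fun p : n × n => single p.1 p.2 (1 : K) + single p.2 p.1 1) := by
  have hsum : ∑ p : n × n, A p.1 p.2 • (single p.1 p.2 (1 : K) + single p.2 p.1 1) =
      (2 : K) • A := by
    ext i j
    simp [sum_apply, single_apply, Fintype.sum_prod_type, ite_and, Finset.sum_add_distrib,
      two_mul, hA.apply]
  rw [← inv_smul_smul₀ (two_ne_zero' K) A, ← hsum]
  exact smul_mem _ _ (sum_mem fun p _ => smul_mem _ _ (subset_span ⟨p, rfl⟩))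

section
variable {m : ℕ}

lemma Qiid_isSymm (p : Fin m × Fin m) : (Qiid m p).IsSymm :=
  IsSymm.ext fun _ _ => by simp only [Qiid]; ring

lemma Qiid_swap (p : Fin m × Fin m) : Qiid m p.swap = Qiid m p := by
  ext x x'
  simp only [Qiid, Prod.fst_swap, Prod.snd_swap]
  ring

lemma Qiid_self (i : Fin m) : Qiid m (i, i) = single i i 1 := by
  ext x x'
  simp only [Qiid, single_apply]
  grind

lemma four_smul_Qiid_sub (i j : Fin m) :
    (4 : ℝ) • Qiid m (i, j) - Qiid m (i, i) - Qiid m (j, j) = single i j 1 + single j i 1 := by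
  ext x x'
  simp only [Qiid, single_apply, Matrix.sub_apply, Matrix.add_apply, Matrix.smul_apply,
    smul_eq_mul]
  grind

lemma Qiid_apply_of_lt {a b c d : Fin m} (hba : b < a) (hdc : d ≤ c) :
    Qiid m (c, d) a b = if (c, d) = (a, b) then 4⁻¹ else 0 := by
  unfold Qiid
  grind

lemma Qiid_mem_span (i j : Fin m) :
    Qiid m (i, j) ∈ span ℝ (Set.range fun p : {p : Fin m × Fin m // p.2 ≤ p.1} => Qiid m p.1) := by
  rcases le_total j i with hji | hij
  · exact subset_span ⟨⟨(i, j), hji⟩, rfl⟩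
  · rw [← Qiid_swap]
    exact subset_span ⟨⟨(j, i), hij⟩, rfl⟩

lemma span_Qiid_eq_symSub :
    span ℝ (Set.range fun p : {p : Fin m × Fin m // p.2 ≤ p.1} => Qiid m p.1) = symSub m := by
  apply le_antisymm
  · rw [span_le]
    rintro _ ⟨p, rfl⟩
    exact mem_symSub_iff.2 (Qiid_isSymm p.1)
  · intro A hA
    refine span_le.2 ?_ (mem_symSub_iff.1 hA).mem_span_single_add_single
    rintro _ ⟨⟨i, j⟩, rfl⟩
    change single i j 1 + single j i 1 ∈ _
    rw [← four_smul_Qiid_sub]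
    exact sub_mem (sub_mem (smul_mem _ _ (Qiid_mem_span i j)) (Qiid_mem_span i i))
      (Qiid_mem_span j j)

lemma linearIndependent_Qiid :
    LinearIndependent ℝ (fun p : {p : Fin m × Fin m // p.2 ≤ p.1} => Qiid m p.1) := by
  rw [Fintype.linearIndependent_iff]
  intro g hg
  have entry (a b : Fin m) : ∑ q, g q * Qiid m q.1 a b = 0 := by
    simpa [Matrix.sum_apply] using congrFun (congrFun hg a) b
  have off_diag (q : {p : Fin m × Fin m // p.2 ≤ p.1}) (hq : q.1.2 < q.1.1) : g q = 0 := by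
    have h := entry q.1.1 q.1.2
    rw [Fintype.sum_eq_single q fun q' hq' => by
      rw [Qiid_apply_of_lt hq q'.2, if_neg (Subtype.coe_ne_coe.2 hq'), mul_zero]] at h
    simpa [Qiid_apply_of_lt hq q.2] using h
  rintro ⟨⟨a, b⟩, hba : b ≤ a⟩
  rcases hba.lt_or_eq with hlt | rfl
  · exact off_diag _ hlt
  have h := entry b b
  rw [Fintype.sum_eq_single ⟨(b, b), hba⟩ fun q' hq' => ?_] at h
  · simpa [Qiid_self] using h
  obtain ⟨⟨c, d⟩, hdc : d ≤ c⟩ := q'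
  rcases hdc.lt_or_eq with hlt | rfl
  · rw [off_diag _ hlt, zero_mul]
  · have hdb : d ≠ b := fun h => hq' (by subst h; rfl)
    simp [Qiid_self, hdb]

end

theorem Qiid_basis_symmetric_general (m : ℕ) :
    LinearIndependent ℝ
      (fun p : {p : Fin m × Fin m // p.2 ≤ p.1} => Qiid m p.1) ∧
    Submodule.span ℝ
      (Set.range (fun p : {p : Fin m × Fin m // p.2 ≤ p.1} => Qiid m p.1)) =
      symSub m :=
  ⟨linearIndependent_Qiid, span_Qiid_eq_symSub⟩

/-- The family {Q_{ij} : i ≥ j} is linearly independent and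
spans the space of symmetric m×m real matrices. -/
theorem Qiid_basis_symmetric (m : ℕ) (hm : 1 ≤ m) :
    LinearIndependent ℝ
      (fun p : {p : Fin m × Fin m // p.2 ≤ p.1} => Qiid m p.1) ∧
    Submodule.span ℝ
      (Set.range (fun p : {p : Fin m × Fin m // p.2 ≤ p.1} => Qiid m p.1)) =
      symSub m :=
  Qiid_basis_symmetric_general m
end
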